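/- arXiv:2410.09974 — 5 statements merged into one kernel-verified Lean document; each statement's English description precedes it below -/
import Mathlib

section
/- Let λ₁ > 0 and λ₂ > μ₂ > 0, and for j ≥ 1 set p_j = (λ₁(λ₂−μ₂)/λ₂²)·B(j, 1 + λ₁/(λ₂−μ₂))·₂F₁(j+1, 1 + λ₁/(λ₂−μ₂), j+1+λ₁/(λ₂−μ₂), μ₂/λ₂). Then p_j ∼ c₂·j^{−(1+λ₁/(λ₂−μ₂))} as j → ∞, i.e. lim_{j→∞} p_j·j^{1+λ₁/(λ₂−μ₂)} = c₂, where c₂ = (λ₁/λ₂)·(λ₂/(λ₂−μ₂))^{λ₁/(λ₂−μ₂)}·Γ(1 + λ₁/(λ₂−μ₂)). -/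
open Filter Topology MeasureTheory

/-- The Beta function `B(a,b) = ∫₀¹ s^(a-1) (1-s)^(b-1) ds`. -/
noncomputable def betaFn (a b : ℝ) : ℝ :=
  ∫ s in (0:ℝ)..1, s ^ (a - 1) * (1 - s) ^ (b - 1)

/-- The Gauss hypergeometric function
`₂F₁(a,b,c,z) = (1/B(b,c-b)) ∫₀¹ s^(b-1) (1-s)^(c-b-1) (1-sz)^(-a) ds`. -/
noncomputable def gauss2F1 (a b c z : ℝ) : ℝ :=
  (betaFn b (c - b))⁻¹ * ∫ s in (0:ℝ)..1, s ^ (b - 1) * (1 - s) ^ (c - b - 1) * (1 - s * z) ^ (-a)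

/-!
Cancelling the Beta factor against the normalisation of `₂F₁` leaves, with `z = μ₂/λ₂`,
`B(j, 1+γ) ₂F₁(j+1, 1+γ, j+1+γ, z) = ∫₀¹ s^γ (1-s)^(j-1) (1-sz)^(-(j+1)) ds`.
After the substitution `s = u/j`, `j^(1+γ)` times this integral is
`∫₀^j u^γ (1-u/j)^(j-1) (1-uz/j)^(-(j+1)) du`, whose integrand tends to `u^γ e^(-(1-z)u)`.
Since `1 - x ≤ (1 - xz)(1 - (1-z)x)` (the difference is `z(1-z)x²`), the integrand is dominated
by `(1-z)^(-2) u^γ e^(-(1-z)u/2)` for `j ≥ 2`, so dominated convergence gives the limit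
`(1-z)^(-(1+γ)) Γ(1+γ)`.
-/

open Set Real

lemma betaFn_comm (a b : ℝ) : betaFn a b = betaFn b a := by
  rw [betaFn, betaFn]
  simpa [mul_comm] using
    (intervalIntegral.integral_comp_sub_left (a := 0) (b := 1)
      (fun s => s ^ (b - 1) * (1 - s) ^ (a - 1)) 1)

lemma betaFn_pos {a b : ℝ} (ha : 1 ≤ a) (hb : 1 ≤ b) : 0 < betaFn a b := by
  refine intervalIntegral.intervalIntegral_pos_of_pos_on ?_ (fun s hs => ?_) zero_lt_one
  · refine ContinuousOn.intervalIntegrable (ContinuousOn.mul ?_ ?_)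
    · exact continuousOn_id.rpow_const fun _ _ => Or.inr (by linarith)
    · exact (continuousOn_const.sub continuousOn_id).rpow_const fun _ _ => Or.inr (by linarith)
  · exact mul_pos (rpow_pos_of_pos hs.1 _) (rpow_pos_of_pos (by linarith [hs.2]) _)

lemma one_sub_le_mul_exp {x z : ℝ} (hz0 : 0 ≤ z) (hz1 : z ≤ 1) (hxz : 0 ≤ 1 - x * z) :
    1 - x ≤ (1 - x * z) * exp (-((1 - z) * x)) :=
  calc 1 - x ≤ (1 - x * z) * (1 - (1 - z) * x) := by
        nlinarith [mul_nonneg (mul_nonneg hz0 (sub_nonneg.2 hz1)) (sq_nonneg x)]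
    _ ≤ (1 - x * z) * exp (-((1 - z) * x)) := by
        gcongr; linarith [add_one_le_exp (-((1 - z) * x))]

lemma one_sub_rpow_mul_rpow_le {x z m : ℝ} (hz0 : 0 ≤ z) (hz1 : z < 1) (hx1 : x ≤ 1)
    (hm : 0 ≤ m) :
    (1 - x) ^ m * (1 - x * z) ^ (-(m + 2)) ≤ ((1 - z) ^ 2)⁻¹ * exp (-((1 - z) * x * m)) := by
  have hD : 1 - z ≤ 1 - x * z := by nlinarith
  have hDpos : 0 < 1 - x * z := by linarith
  calc (1 - x) ^ m * (1 - x * z) ^ (-(m + 2))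
      ≤ ((1 - x * z) * exp (-((1 - z) * x))) ^ m * (1 - x * z) ^ (-(m + 2)) := by
        gcongr
        exact one_sub_le_mul_exp hz0 hz1.le hDpos.le
    _ = ((1 - x * z) ^ 2)⁻¹ * exp (-((1 - z) * x * m)) := by
        rw [mul_rpow hDpos.le (exp_pos _).le, ← exp_mul, rpow_neg hDpos.le,
          rpow_add hDpos, rpow_two]
        field_simp
    _ ≤ ((1 - z) ^ 2)⁻¹ * exp (-((1 - z) * x * m)) := by
        gcongr

lemma tendsto_one_add_div_rpow_add_exp (t d : ℝ) :
    Tendsto (fun x : ℝ => (1 + t / x) ^ (x + d)) atTop (𝓝 (exp t)) := by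
  have hbase : Tendsto (fun x : ℝ => 1 + t / x) atTop (𝓝 1) := by
    simpa using (tendsto_const_nhds (x := t)).div_atTop tendsto_id |>.const_add 1
  have hd : Tendsto (fun x : ℝ => (1 + t / x) ^ d) atTop (𝓝 1) := by
    simpa using hbase.rpow_const (Or.inl one_ne_zero)
  refine ((tendsto_one_add_div_rpow_exp t).mul hd).congr' ?_ |>.trans (by rw [mul_one])
  filter_upwards [hbase.eventually_const_lt one_pos] with x hx
  rw [← rpow_add hx]

lemma betaFn_mul_gauss2F1_eq_integral {γ : ℝ} (hγ : 0 ≤ γ) (z : ℝ) {n : ℝ} (hn : 1 ≤ n) :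
    betaFn n (1 + γ) * gauss2F1 (n + 1) (1 + γ) (n + 1 + γ) z =
      ∫ s in (0:ℝ)..1, s ^ γ * (1 - s) ^ (n - 1) * (1 - s * z) ^ (-(n + 1)) := by
  have hc : n + 1 + γ - (1 + γ) = n := by ring
  rw [gauss2F1, hc, betaFn_comm, mul_inv_cancel_left₀ (betaFn_pos (by linarith) hn).ne',
    add_sub_cancel_left]

/-- The integrand of `∫₀¹ s^γ (1-s)^(n-1) (1-sz)^(-(n+1)) ds` after the substitution `s = u/n`. -/
noncomputable def scaledIntegrand (γ z n : ℝ) : ℝ → ℝ :=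
  indicator (Ioc 0 n) fun u => u ^ γ * (1 - u / n) ^ (n - 1) * (1 - u / n * z) ^ (-(n + 1))

lemma integral_scaledIntegrand (γ z : ℝ) {n : ℝ} (hn : 0 < n) :
    ∫ u in Ioi 0, scaledIntegrand γ z n u =
      n ^ (1 + γ) * ∫ s in (0:ℝ)..1, s ^ γ * (1 - s) ^ (n - 1) * (1 - s * z) ^ (-(n + 1)) := by
  set g : ℝ → ℝ := fun s => s ^ γ * (1 - s) ^ (n - 1) * (1 - s * z) ^ (-(n + 1))
  have hsubst := intervalIntegral.inv_smul_integral_comp_div (a := 0) (b := n) g n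
  rw [zero_div, div_self hn.ne', smul_eq_mul] at hsubst
  rw [scaledIntegrand, setIntegral_indicator measurableSet_Ioc,
    inter_eq_self_of_subset_right Ioc_subset_Ioi_self, ← intervalIntegral.integral_of_le hn.le,
    ← hsubst, ← mul_assoc, ← intervalIntegral.integral_const_mul]
  refine intervalIntegral.integral_congr fun u hu => ?_
  rw [uIcc_of_le hn.le] at hu
  simp only [g, div_rpow hu.1 hn.le, rpow_add hn, rpow_one]
  field_simp

lemma tendsto_scaledIntegrand (γ z : ℝ) {u : ℝ} (hu : 0 < u) :
    Tendsto (fun n : ℕ => scaledIntegrand γ z n u) atTop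
      (𝓝 (u ^ γ * exp (-((1 - z) * u)))) := by
  have h1 : Tendsto (fun n : ℝ => (1 - u / n) ^ (n - 1)) atTop (𝓝 (exp (-u))) := by
    simpa [neg_div, ← sub_eq_add_neg] using tendsto_one_add_div_rpow_add_exp (-u) (-1)
  have h2 : Tendsto (fun n : ℝ => (1 - u / n * z) ^ (-(n + 1))) atTop (𝓝 (exp (u * z))) := by
    have h := (tendsto_one_add_div_rpow_add_exp (-(u * z)) 1).inv₀ (exp_ne_zero _)
    rw [← exp_neg, neg_neg] at h
    refine h.congr' ?_
    filter_upwards [eventually_gt_atTop (u * z), eventually_gt_atTop 0] with n hn hn0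
    have hbase : 0 ≤ 1 + -(u * z) / n := by
      rw [neg_div]; linarith [(div_lt_one hn0).2 hn]
    rw [← rpow_neg hbase, neg_div, div_mul_eq_mul_div, ← sub_eq_add_neg]
  have h3 := ((tendsto_const_nhds (x := u ^ γ)).mul h1).mul h2
  rw [mul_assoc, ← exp_add, show -u + u * z = -((1 - z) * u) by ring] at h3
  have h4 : Tendsto (fun n : ℝ => scaledIntegrand γ z n u) atTop _ := h3.congr' <| by
    filter_upwards [eventually_ge_atTop u] with n hn
    rw [scaledIntegrand, indicator_of_mem (show u ∈ Ioc 0 n from ⟨hu, hn⟩)]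
  exact h4.comp tendsto_natCast_atTop_atTop

lemma norm_scaledIntegrand_le {γ z n u : ℝ} (hz0 : 0 ≤ z) (hz1 : z < 1) (hn : 2 ≤ n)
    (hu : 0 < u) :
    ‖scaledIntegrand γ z n u‖ ≤ ((1 - z) ^ 2)⁻¹ * (u ^ γ * exp (-((1 - z) / 2 * u))) := by
  by_cases hun : u ≤ n
  · have hx1 : u / n ≤ 1 := (div_le_one (by linarith)).2 hun
    have hratio := one_sub_rpow_mul_rpow_le hz0 hz1 hx1 (by linarith : 0 ≤ n - 1)
    rw [show n - 1 + 2 = n + 1 by ring] at hratio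
    have hdecay : -((1 - z) * (u / n) * (n - 1)) ≤ -((1 - z) / 2 * u) := by
      have : u / 2 ≤ u / n * (n - 1) := by
        rw [div_mul_eq_mul_div, le_div_iff₀ (by linarith)]; nlinarith
      nlinarith
    have hxz : 0 ≤ 1 - u / n * z := by nlinarith [div_nonneg hu.le (by linarith : (0:ℝ) ≤ n)]
    have hnonneg := rpow_nonneg (sub_nonneg.2 hx1) (n - 1)
    rw [scaledIntegrand, indicator_of_mem (show u ∈ Ioc 0 n from ⟨hu, hun⟩),
      norm_of_nonneg (by positivity)]
    calc u ^ γ * (1 - u / n) ^ (n - 1) * (1 - u / n * z) ^ (-(n + 1))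
        = u ^ γ * ((1 - u / n) ^ (n - 1) * (1 - u / n * z) ^ (-(n + 1))) := by ring
      _ ≤ u ^ γ * (((1 - z) ^ 2)⁻¹ * exp (-((1 - z) * (u / n) * (n - 1)))) := by
        gcongr
      _ ≤ ((1 - z) ^ 2)⁻¹ * (u ^ γ * exp (-((1 - z) / 2 * u))) := by
        rw [mul_left_comm]; gcongr
  · rw [scaledIntegrand, indicator_of_notMem (fun h => hun h.2), norm_zero]
    positivity

lemma tendsto_integral_scaledIntegrand {γ z : ℝ} (hγ : -1 < γ) (hz0 : 0 ≤ z) (hz1 : z < 1) :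
    Tendsto (fun n : ℕ => ∫ u in Ioi 0, scaledIntegrand γ z n u) atTop
      (𝓝 ((1 / (1 - z)) ^ (1 + γ) * Gamma (1 + γ))) := by
  have hlimit : ∫ u in Ioi 0, u ^ γ * exp (-((1 - z) * u)) =
      (1 / (1 - z)) ^ (1 + γ) * Gamma (1 + γ) := by
    simpa using integral_rpow_mul_exp_neg_mul_Ioi (a := 1 + γ) (by linarith) (sub_pos.2 hz1)
  have hbound : IntegrableOn (fun u => u ^ γ * exp (-((1 - z) / 2 * u))) (Ioi 0) := by
    simpa using integrableOn_rpow_mul_exp_neg_mul_rpow hγ one_pos (by linarith : 0 < (1 - z) / 2)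
  rw [← hlimit]
  refine tendsto_integral_filter_of_dominated_convergence
    (fun u => ((1 - z) ^ 2)⁻¹ * (u ^ γ * exp (-((1 - z) / 2 * u))))
    (Eventually.of_forall fun n => (Measurable.indicator (by fun_prop)
      measurableSet_Ioc).aestronglyMeasurable) ?_ (hbound.const_mul _) ?_
  · filter_upwards [eventually_ge_atTop 2] with n hn
    filter_upwards [self_mem_ae_restrict measurableSet_Ioi] with u hu
    exact norm_scaledIntegrand_le hz0 hz1 (by exact_mod_cast hn) hu
  · filter_upwards [self_mem_ae_restrict measurableSet_Ioi] with u hu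
    exact tendsto_scaledIntegrand γ z hu

/-- Supercritical asymptotics: for
`p_j = (λ₁(λ₂-μ₂)/λ₂²) B(j, 1+γ) ₂F₁(j+1, 1+γ, j+1+γ, μ₂/λ₂)` with `γ = λ₁/(λ₂-μ₂)`,
one has `p_j j^(1+γ) → c₂ = (λ₁/λ₂) (λ₂/(λ₂-μ₂))^γ Γ(1+γ)` as `j → ∞`. -/
theorem asymptotics_supercritical (lam1 lam2 mu2 : ℝ)
    (hlam1 : 0 < lam1) (hmu2 : 0 < mu2) (h : mu2 < lam2) :
    Tendsto
      (fun j : ℕ =>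
        (lam1 * (lam2 - mu2) / lam2 ^ 2 * betaFn j (1 + lam1 / (lam2 - mu2)) *
            gauss2F1 (j + 1) (1 + lam1 / (lam2 - mu2)) (j + 1 + lam1 / (lam2 - mu2))
              (mu2 / lam2)) *
          (j : ℝ) ^ (1 + lam1 / (lam2 - mu2)))
      atTop
      (𝓝 (lam1 / lam2 * (lam2 / (lam2 - mu2)) ^ (lam1 / (lam2 - mu2)) *
        Real.Gamma (1 + lam1 / (lam2 - mu2)))) := by
  have hlam2 : 0 < lam2 := hmu2.trans h
  have hsub : 0 < lam2 - mu2 := sub_pos.2 h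
  set γ := lam1 / (lam2 - mu2)
  have hγ : 0 < γ := div_pos hlam1 hsub
  have hlimit :
      lam1 * (lam2 - mu2) / lam2 ^ 2 * ((1 / (1 - mu2 / lam2)) ^ (1 + γ) * Gamma (1 + γ)) =
        lam1 / lam2 * (lam2 / (lam2 - mu2)) ^ γ * Gamma (1 + γ) := by
    rw [one_sub_div hlam2.ne', one_div_div, rpow_add (div_pos hlam2 hsub), rpow_one]
    field_simp
  rw [← hlimit]
  refine ((tendsto_integral_scaledIntegrand (by linarith) (div_pos hmu2 hlam2).le
    ((div_lt_one hlam2).2 h)).const_mul _).congr' ?_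
  filter_upwards [eventually_ge_atTop 1] with j hj
  rw [integral_scaledIntegrand _ _ (by positivity),
    ← betaFn_mul_gauss2F1_eq_integral hγ.le _ (by exact_mod_cast hj)]
  ring
end

section
/- Let λ₁, λ₂ > 0 and for j ≥ 1 set p_j = (λ₁/λ₂)·∫₀^∞ e^{−(λ₁/λ₂)s} s^{j−1} (1+s)^{−(j+1)} ds (that is, p_j = (λ₁/λ₂)·Γ(j)·U(j,0,λ₁/λ₂)). Then for every m ∈ ℕ one has lim_{j→∞} j^m·p_j = 0, while for every ε > 0 one has lim_{j→∞} e^{εj}·p_j = +∞. -/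
/-!
With `c = λ₁/λ₂`, the integrand is `e^{-cs} (s/(1+s))^{j-1} (1+s)^{-2}`, and `(s/(1+s))^{j-1}` is
squeezed between `e^{-(j-1)/s}` and `e^{-(j-1)/(1+s)}`. Hence `e^{-cs}` competes with `e^{-j/s}`,
whose product is largest near `s ≈ √j`. By AM-GM, `cs/2 + j/(1+s) ≥ 2 √(cj/2) - c/2`, which gives
`p_j ≤ K e^{-a√j}`; integrating only over `[√j, √j + 1]` gives `p_j ≥ A e^{-b√j}`. A stretched
exponential in `√j` beats every power of `j` and loses to every `e^{εj}`.
-/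

open Filter Topology MeasureTheory

/-- Critical-regime limit distribution
`p_j = (λ₁/λ₂) ∫₀^∞ e^(-(λ₁/λ₂)s) s^(j-1) (1+s)^(-(j+1)) ds = (λ₁/λ₂) Γ(j) U(j,0,λ₁/λ₂)`. -/
noncomputable def critP (lam1 lam2 : ℝ) (j : ℕ) : ℝ :=
  lam1 / lam2 *
    ∫ s in Set.Ioi (0:ℝ), Real.exp (-(lam1 / lam2) * s) * s ^ (j - 1) / (1 + s) ^ (j + 1)

open Real Set

noncomputable def critIntegrand (c : ℝ) (j : ℕ) (s : ℝ) : ℝ :=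
  exp (-c * s) * s ^ (j - 1) / (1 + s) ^ (j + 1)

lemma critP_eq (lam1 lam2 : ℝ) (j : ℕ) :
    critP lam1 lam2 j = lam1 / lam2 * ∫ s in Ioi 0, critIntegrand (lam1 / lam2) j s :=
  rfl

lemma critIntegrand_nonneg (c : ℝ) (j : ℕ) {s : ℝ} (hs : 0 ≤ s) : 0 ≤ critIntegrand c j s := by
  unfold critIntegrand; positivity

lemma critIntegrand_eq {j : ℕ} (hj : 1 ≤ j) (c s : ℝ) :
    critIntegrand c j s = exp (-c * s) * (s / (1 + s)) ^ (j - 1) / (1 + s) ^ 2 := by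
  rw [critIntegrand, div_pow, ← mul_div_assoc, div_div, ← pow_add,
    show j - 1 + 2 = j + 1 by omega]

lemma integrableOn_critIntegrand {c : ℝ} (hc : 0 < c) (j : ℕ) :
    IntegrableOn (critIntegrand c j) (Ioi 0) := by
  refine (exp_neg_integrableOn_Ioi 0 hc).mono' ?_ ?_
  · refine ContinuousOn.aestronglyMeasurable ?_ measurableSet_Ioi
    refine ContinuousOn.div (by fun_prop) (by fun_prop) fun s hs => ?_
    exact (pow_pos (by linarith [mem_Ioi.mp hs]) _).ne'
  · refine (ae_restrict_iff' measurableSet_Ioi).2 (Eventually.of_forall fun s (hs : 0 < s) => ?_)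
    have hnum : s ^ (j - 1) ≤ (1 + s) ^ (j + 1) :=
      calc s ^ (j - 1) ≤ (1 + s) ^ (j - 1) := by gcongr; linarith
        _ ≤ (1 + s) ^ (j + 1) := pow_le_pow_right₀ (by linarith) (by omega)
    rw [norm_of_nonneg (critIntegrand_nonneg c j hs.le), critIntegrand, mul_div_assoc]
    exact mul_le_of_le_one_right (exp_pos _).le (div_le_one_of_le₀ hnum (by positivity))

lemma div_one_add_pow_le_exp {s : ℝ} (hs : 0 ≤ s) (n : ℕ) :
    (s / (1 + s)) ^ n ≤ exp (-(n / (1 + s))) := by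
  have hbase : s / (1 + s) ≤ exp (-(1 / (1 + s))) := by
    have : s / (1 + s) = -(1 / (1 + s)) + 1 := by field_simp; ring
    exact this ▸ add_one_le_exp _
  calc (s / (1 + s)) ^ n ≤ exp (-(1 / (1 + s))) ^ n := by gcongr
    _ = exp (-(n / (1 + s))) := by rw [← exp_nat_mul, mul_neg, mul_one_div]

lemma exp_neg_div_le_div_one_add_pow {s : ℝ} (hs : 0 < s) (n : ℕ) :
    exp (-(n / s)) ≤ (s / (1 + s)) ^ n := by
  have hbase : exp (-(1 / s)) ≤ s / (1 + s) := by
    have : s / (1 + s) = (1 / s + 1)⁻¹ := by field_simp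
    rw [this, exp_neg]
    exact inv_anti₀ (by positivity) (add_one_le_exp _)
  calc exp (-(n / s)) = exp (-(1 / s)) ^ n := by rw [← exp_nat_mul, mul_neg, mul_one_div]
    _ ≤ (s / (1 + s)) ^ n := by gcongr

lemma two_mul_sqrt_mul_sqrt_le {a b x : ℝ} (ha : 0 ≤ a) (hb : 0 ≤ b) (hx : 0 < x) :
    2 * (√a * √b) ≤ a * x + b / x := by
  have key : 2 * (√a * √b) * x ≤ a * x * x + b := by
    have hsq : a * x * x + b - 2 * (√a * √b) * x = (√a * x - √b) ^ 2 := by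
      ring_nf; rw [sq_sqrt ha, sq_sqrt hb]; ring
    nlinarith [sq_nonneg (√a * x - √b)]
  rw [← le_div_iff₀ hx] at key
  rwa [add_div, mul_div_cancel_right₀ _ hx.ne'] at key

lemma critIntegrand_le {c : ℝ} (hc : 0 ≤ c) {j : ℕ} (hj : 1 ≤ j) {s : ℝ} (hs : 0 ≤ s) :
    critIntegrand c j s ≤
      exp (1 + c / 2) * exp (-(2 * √(c / 2) * √j)) * exp (-(c / 2) * s) := by
  have h1s : 0 < 1 + s := by linarith
  have hamgm := two_mul_sqrt_mul_sqrt_le (by positivity) (Nat.cast_nonneg j) h1s (a := c / 2)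
  have hinv : 1 / (1 + s) ≤ 1 := div_le_one_of_le₀ (by linarith) h1s.le
  rw [critIntegrand_eq hj, ← exp_add, ← exp_add]
  calc exp (-c * s) * (s / (1 + s)) ^ (j - 1) / (1 + s) ^ 2
      ≤ exp (-c * s) * exp (-(((j - 1 : ℕ) : ℝ) / (1 + s))) := by
        refine (div_le_self (by positivity) (one_le_pow₀ (by linarith))).trans ?_
        gcongr
        exact div_one_add_pow_le_exp hs _
    _ ≤ exp (1 + c / 2 + -(2 * √(c / 2) * √j) + -(c / 2) * s) := by
        rw [← exp_add, exp_le_exp, Nat.cast_pred (by omega), sub_div]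
        linarith

lemma integral_critIntegrand_le {c : ℝ} (hc : 0 < c) {j : ℕ} (hj : 1 ≤ j) :
    ∫ s in Ioi 0, critIntegrand c j s ≤
      exp (1 + c / 2) * (2 / c) * exp (-(2 * √(c / 2) * √j)) := by
  have hexp : ∫ s in Ioi (0 : ℝ), exp (-(c / 2) * s) = 2 / c := by
    rw [integral_exp_mul_Ioi (by linarith)]
    field_simp
    simp
  calc ∫ s in Ioi 0, critIntegrand c j s
      ≤ ∫ s in Ioi 0, exp (1 + c / 2) * exp (-(2 * √(c / 2) * √j)) * exp (-(c / 2) * s) :=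
        setIntegral_mono_on (integrableOn_critIntegrand hc j)
          ((exp_neg_integrableOn_Ioi 0 (half_pos hc)).const_mul _) measurableSet_Ioi
          fun s hs => critIntegrand_le hc.le hj (le_of_lt hs)
    _ = exp (1 + c / 2) * (2 / c) * exp (-(2 * √(c / 2) * √j)) := by
        rw [integral_const_mul, hexp]; ring

lemma le_critIntegrand {c : ℝ} (hc : 0 ≤ c) {j : ℕ} (hj : 1 ≤ j) {s : ℝ}
    (hs : s ∈ Icc √j (√j + 1)) :
    exp (-(c * (√j + 1))) * exp (-√j) / (2 + √j) ^ 2 ≤ critIntegrand c j s := by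
  have ht : 0 < √(j : ℝ) := Real.sqrt_pos.2 (by exact_mod_cast hj)
  have hs0 : 0 < s := ht.trans_le hs.1
  have hratio : exp (-√j) ≤ (s / (1 + s)) ^ (j - 1) := by
    refine le_trans ?_ (exp_neg_div_le_div_one_add_pow hs0 _)
    rw [exp_le_exp, neg_le_neg_iff, Nat.cast_pred (by omega)]
    calc ((j : ℝ) - 1) / s ≤ j / √j :=
          div_le_div₀ (Nat.cast_nonneg j) (by linarith) ht hs.1
      _ = √j := div_sqrt
  have hexp : exp (-(c * (√j + 1))) ≤ exp (-c * s) := by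
    rw [exp_le_exp, neg_mul, neg_le_neg_iff]; gcongr; exact hs.2
  rw [critIntegrand_eq hj]
  gcongr ?_ * ?_ / ?_ ^ 2
  linarith [hs.2]

lemma le_integral_critIntegrand {c : ℝ} (hc : 0 < c) {j : ℕ} (hj : 1 ≤ j) :
    exp (-(c + 2)) / 2 * exp (-((c + 2) * √j)) ≤ ∫ s in Ioi 0, critIntegrand c j s := by
  set t := √(j : ℝ)
  have ht : 0 ≤ t := Real.sqrt_nonneg _
  have hsq : (2 + t) ^ 2 ≤ 2 * exp (2 + t) := by
    have := pow_div_factorial_le_exp (2 + t) (by positivity) 2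
    norm_num at this
    linarith
  have hIcc : Icc t (t + 1) ⊆ Ioi 0 := fun s hs =>
    (Real.sqrt_pos.2 (by exact_mod_cast hj : (0 : ℝ) < j)).trans_le hs.1
  calc exp (-(c + 2)) / 2 * exp (-((c + 2) * t))
      = exp (-(c * (t + 1))) * exp (-t) / (2 * exp (2 + t)) := by
        rw [div_mul_eq_mul_div, mul_comm 2, ← div_div, div_left_inj' two_ne_zero, ← exp_add,
          ← exp_add, ← exp_sub]
        ring_nf
    _ ≤ exp (-(c * (t + 1))) * exp (-t) / (2 + t) ^ 2 := by gcongr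
    _ = ∫ _ in Icc t (t + 1), exp (-(c * (t + 1))) * exp (-t) / (2 + t) ^ 2 := by
        simp [measureReal_def, Real.volume_Icc]
    _ ≤ ∫ s in Icc t (t + 1), critIntegrand c j s :=
        setIntegral_mono_on (integrableOn_const (by simp))
          ((integrableOn_critIntegrand hc j).mono_set hIcc) measurableSet_Icc
          fun s hs => le_critIntegrand hc.le hj hs
    _ ≤ ∫ s in Ioi 0, critIntegrand c j s :=
        setIntegral_mono_set (integrableOn_critIntegrand hc j)
          ((ae_restrict_iff' measurableSet_Ioi).2
            (Eventually.of_forall fun s hs => critIntegrand_nonneg c j (le_of_lt hs)))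
          hIcc.eventuallyLE

lemma tendsto_pow_mul_exp_neg_mul_sqrt_atTop_nhds_zero {a : ℝ} (ha : 0 < a) (m : ℕ) :
    Tendsto (fun x : ℝ => x ^ m * exp (-(a * √x))) atTop (𝓝 0) := by
  have h := (tendsto_rpow_mul_exp_neg_mul_atTop_nhds_zero (2 * m : ℕ) a ha).comp
    tendsto_sqrt_atTop
  refine h.congr' ((eventually_ge_atTop 0).mono fun x hx => ?_)
  simp only [Function.comp_apply, rpow_natCast, pow_mul, sq_sqrt hx, neg_mul]

lemma tendsto_exp_mul_mul_exp_neg_mul_sqrt_atTop {ε : ℝ} (hε : 0 < ε) (b : ℝ) :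
    Tendsto (fun x : ℝ => exp (ε * x) * exp (-(b * √x))) atTop atTop := by
  have hlin : Tendsto (fun y : ℝ => y * (ε * y - b)) atTop atTop :=
    tendsto_id.atTop_mul_atTop₀
      (tendsto_atTop_add_const_right _ _ (tendsto_id.const_mul_atTop hε))
  refine (tendsto_exp_atTop.comp (hlin.comp tendsto_sqrt_atTop)).congr'
    ((eventually_ge_atTop 0).mono fun x hx => ?_)
  simp only [Function.comp_apply, ← exp_add]
  rw [mul_sub, ← mul_assoc, mul_comm _ ε, mul_assoc, mul_self_sqrt hx]
  ring_nf

/-- In the critical regime the tail of `(p_j)` decays faster than any polynomial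
but slower than any exponential: `j^m p_j → 0` for every `m ∈ ℕ`, while
`e^(εj) p_j → +∞` for every `ε > 0`. -/
theorem critical_intermediate_decay (lam1 lam2 : ℝ) (hlam1 : 0 < lam1) (hlam2 : 0 < lam2) :
    (∀ m : ℕ, Tendsto (fun j : ℕ => (j : ℝ) ^ m * critP lam1 lam2 j) atTop (𝓝 0)) ∧
    (∀ ε : ℝ, 0 < ε →
      Tendsto (fun j : ℕ => Real.exp (ε * j) * critP lam1 lam2 j) atTop atTop) := by
  set c := lam1 / lam2
  have hc : 0 < c := div_pos hlam1 hlam2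
  refine ⟨fun m => ?_, fun ε hε => ?_⟩
  · have hlim := ((tendsto_pow_mul_exp_neg_mul_sqrt_atTop_nhds_zero (a := 2 * √(c / 2))
      (by positivity) m).comp tendsto_natCast_atTop_atTop).const_mul
        (c * (exp (1 + c / 2) * (2 / c)))
    rw [mul_zero] at hlim
    refine squeeze_zero' (Eventually.of_forall fun j => ?_) ?_ hlim
    · exact mul_nonneg (by positivity) (mul_nonneg hc.le (setIntegral_nonneg measurableSet_Ioi
        fun s hs => critIntegrand_nonneg c j (le_of_lt hs)))
    · filter_upwards [eventually_ge_atTop 1] with j hj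
      rw [critP_eq, Function.comp_apply]
      calc (j : ℝ) ^ m * (c * ∫ s in Ioi 0, critIntegrand c j s)
          ≤ (j : ℝ) ^ m * (c * (exp (1 + c / 2) * (2 / c) * exp (-(2 * √(c / 2) * √j)))) := by
            gcongr; exact integral_critIntegrand_le hc hj
        _ = _ := by ring
  · have hlim := ((tendsto_exp_mul_mul_exp_neg_mul_sqrt_atTop hε (c + 2)).comp
      tendsto_natCast_atTop_atTop).const_mul_atTop (by positivity : 0 < c * (exp (-(c + 2)) / 2))
    refine tendsto_atTop_mono' _ ?_ hlim
    filter_upwards [eventually_ge_atTop 1] with j hj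
    rw [critP_eq, Function.comp_apply]
    calc c * (exp (-(c + 2)) / 2) * (exp (ε * j) * exp (-((c + 2) * √j)))
        = exp (ε * j) * (c * (exp (-(c + 2)) / 2 * exp (-((c + 2) * √j)))) := by ring
      _ ≤ exp (ε * j) * (c * ∫ s in Ioi 0, critIntegrand c j s) := by
        gcongr; exact le_integral_critIntegrand hc hj
end

section
/- Let λ₁, λ₂ > 0 and for j ≥ 1 set p_j = (λ₁/λ₂)·B(j, 1 + λ₁/λ₂). If λ₂ < λ₁ then Σ_{j≥1} j·p_j = λ₁/(λ₁−λ₂); if λ₂ ≥ λ₁ then the series Σ_{j≥1} j·p_j diverges to +∞. -/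
open Filter Topology MeasureTheory

/-- Limit in-degree distribution of the preferential attachment model without
detachment: `p_j = (λ₁/λ₂) B(j, 1 + λ₁/λ₂)` for `j ≥ 1`. -/
noncomputable def yuleP (lam1 lam2 : ℝ) (j : ℕ) : ℝ :=
  lam1 / lam2 * betaFn j (1 + lam1 / lam2)

lemma betaFn_ofReal (a b : ℝ) : ((betaFn a b : ℝ) : ℂ) = Complex.betaIntegral a b := by
  rw [Complex.betaIntegral, betaFn, ← intervalIntegral.integral_ofReal]
  refine intervalIntegral.integral_congr fun x hx => ?_
  rw [Set.uIcc_of_le (zero_le_one)] at hx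
  push_cast
  rw [Complex.ofReal_cpow hx.1 (a-1), Complex.ofReal_cpow (by linarith [hx.2] : (0:ℝ) ≤ 1 - x) (b-1)]
  push_cast
  ring_nf

lemma betaFn_nat_succ (b : ℝ) (hb : 0 < b) (n : ℕ) :
    betaFn ((n : ℕ) + 1) b = (n.factorial : ℝ) / ∏ k ∈ Finset.range (n + 1), (b + k) := by
  apply Complex.ofReal_injective
  rw [betaFn_ofReal]
  have h1 := Complex.betaIntegral_eval_nat_add_one_right (u := (b:ℂ)) (by simpa using hb) n
  rw [show ((((n : ℕ) + 1 : ℝ)) : ℂ) = ((n : ℂ) + 1) by push_cast; ring,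
    Complex.betaIntegral_symm, h1]
  push_cast
  ring_nf

/-- If `λ₂ < λ₁` then `∑_{j≥1} j p_j = λ₁/(λ₁-λ₂)`; if `λ₂ ≥ λ₁` the series
`∑_{j≥1} j p_j` diverges to `+∞`. -/
theorem expected_degree_no_detachment (lam1 lam2 : ℝ) (hlam1 : 0 < lam1) (hlam2 : 0 < lam2) :
    (lam2 < lam1 →
      HasSum (fun j : ℕ => (j : ℝ) * yuleP lam1 lam2 j) (lam1 / (lam1 - lam2))) ∧
    (lam1 ≤ lam2 →
      Tendsto (fun n => ∑ j ∈ Finset.range n, (j : ℝ) * yuleP lam1 lam2 j) atTop atTop) := by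
  set b := lam1 / lam2 with hbdef
  have hb : 0 < b := div_pos hlam1 hlam2
  set f : ℕ → ℝ := fun j => (j : ℝ) * yuleP lam1 lam2 j with hf
  have hP : ∀ m : ℕ, 0 < ∏ k ∈ Finset.range m, (1 + b + (k : ℝ)) := fun m =>
    Finset.prod_pos fun k _ => by positivity
  have hf0 : f 0 = 0 := by simp [hf]
  have hfs : ∀ n : ℕ, f (n + 1)
      = b * ((n + 1).factorial : ℝ) / ∏ k ∈ Finset.range (n + 1), (1 + b + (k : ℝ)) := by
    intro n
    have hbeta := betaFn_nat_succ (1 + b) (by positivity) n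
    have hcast : ((n + 1 : ℕ) : ℝ) = (n : ℝ) + 1 := by push_cast; ring
    simp only [hf, yuleP, ← hbdef, hcast] at *
    rw [hbeta, Nat.factorial_succ]
    have := (hP (n + 1)).ne'
    push_cast
    field_simp
  have hfnn : ∀ j, 0 ≤ f j := by
    intro j
    cases j with
    | zero => simp [hf0]
    | succ n =>
      rw [hfs n]
      have := hP (n + 1)
      positivity
  -- the telescoping quantity
  set d : ℕ → ℝ := fun N => (((N + 1).factorial : ℕ) : ℝ) / ∏ k ∈ Finset.range N, (1 + b + (k : ℝ))
    with hd
  have hd0 : d 0 = 1 := by simp [hd]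
  have hdnn : ∀ N, 0 ≤ d N := fun N => by
    have := hP N; simp only [hd]; positivity
  have hdsucc : ∀ N : ℕ, d (N + 1) = d N * (((N : ℝ) + 2) / (1 + b + N)) := by
    intro N
    have h1 := (hP N).ne'
    have h2 : (1 : ℝ) + b + N ≠ 0 := by positivity
    simp only [hd, Finset.prod_range_succ, Nat.factorial_succ]
    push_cast
    field_simp
    ring
  have hdprod : ∀ N : ℕ, d N = ∏ k ∈ Finset.range N, (((k : ℝ) + 2) / (1 + b + k)) := by
    intro N
    induction N with
    | zero => simpa using hd0
    | succ N ih => rw [hdsucc N, ih, Finset.prod_range_succ]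
  constructor
  · -- convergent case
    intro hlt
    have hb1 : 1 < b := (one_lt_div hlam2).mpr hlt
    have hbne : b - 1 ≠ 0 := by linarith
    have hbb : (0:ℝ) < b / (b - 1) := div_pos hb (by linarith)
    have hsumform : ∀ N : ℕ, ∑ j ∈ Finset.range (N + 1), f j = b / (b - 1) * (1 - d N) := by
      intro N
      induction N with
      | zero => simp [hf0, hd0]
      | succ N ih =>
        rw [Finset.sum_range_succ, ih, hfs N, hdsucc N]
        have h1 := (hP (N + 1)).ne'
        have h2 : (1 : ℝ) + b + N ≠ 0 := by positivity
        have h3 : d N = (((N + 1).factorial : ℕ) : ℝ)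
            / ∏ k ∈ Finset.range N, (1 + b + (k : ℝ)) := rfl
        rw [h3]
        have h4 := (hP N).ne'
        rw [show (∏ k ∈ Finset.range (N+1), (1 + b + (k:ℝ)))
            = (∏ k ∈ Finset.range N, (1 + b + (k:ℝ))) * (1 + b + N) from
          Finset.prod_range_succ _ _, Nat.factorial_succ]
        push_cast
        field_simp
        ring
    -- d tends to 0
    have hH : Tendsto (fun N => ∑ k ∈ Finset.range N, (1 / (1 + b + (k : ℝ)))) atTop atTop := by
      apply tendsto_atTop_mono ?_
        (Real.tendsto_sum_range_one_div_nat_succ_atTop.const_mul_atTop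
          (show (0:ℝ) < 1 / (1 + b) by positivity))
      intro N
      rw [Finset.mul_sum]
      apply Finset.sum_le_sum
      intro k _
      rw [div_mul_div_comm, one_mul]
      apply div_le_div_of_nonneg_left one_pos.le (by positivity)
      nlinarith [Nat.cast_nonneg (α := ℝ) k]
    have hexp : Tendsto (fun N => Real.exp (-((b - 1) *
        ∑ k ∈ Finset.range N, (1 / (1 + b + (k : ℝ)))))) atTop (𝓝 0) := by
      apply Real.tendsto_exp_atBot.comp
      apply tendsto_neg_atTop_atBot.comp
      exact hH.const_mul_atTop (by linarith)
    have hdle : ∀ N, d N ≤ Real.exp (-((b - 1) *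
        ∑ k ∈ Finset.range N, (1 / (1 + b + (k : ℝ))))) := by
      intro N
      rw [hdprod N, Finset.mul_sum, neg_eq_neg_one_mul, Finset.mul_sum, Real.exp_sum]
      apply Finset.prod_le_prod
      · intro k _; positivity
      · intro k _
        have h2 : (0:ℝ) < 1 + b + k := by positivity
        have h5 := Real.add_one_le_exp (-1 * ((b - 1) * (1 / (1 + b + (k:ℝ)))))
        calc ((k : ℝ) + 2) / (1 + b + k) = -1 * ((b - 1) * (1 / (1 + b + (k:ℝ)))) + 1 := by
              field_simp; ring
          _ ≤ _ := h5
    have hdlim : Tendsto d atTop (𝓝 0) := squeeze_zero hdnn hdle hexp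
    have hLlim : Tendsto (fun N => ∑ j ∈ Finset.range N, f j) atTop (𝓝 (b / (b - 1))) := by
      apply (tendsto_add_atTop_iff_nat 1).mp
      have h1 : Tendsto (fun N : ℕ => (1:ℝ) - d N) atTop (𝓝 1) := by
        simpa using tendsto_const_nhds.sub hdlim
      have h2 : Tendsto (fun N => b / (b - 1) * (1 - d N)) atTop (𝓝 (b / (b - 1))) := by
        simpa using h1.const_mul (b / (b - 1))
      exact h2.congr fun N => (hsumform N).symm
    have hbdd : ∀ n, ∑ j ∈ Finset.range n, f j ≤ b / (b - 1) := by
      intro n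
      cases n with
      | zero => simpa using hbb.le
      | succ N =>
        rw [hsumform N]
        have h1 := hdnn N
        nlinarith
    have hsummable : Summable f := summable_of_sum_range_le hfnn hbdd
    have htsum := tendsto_nhds_unique hsummable.hasSum.tendsto_sum_nat hLlim
    have heq : b / (b - 1) = lam1 / (lam1 - lam2) := by
      rw [hbdef]
      have h1 : lam1 - lam2 ≠ 0 := by linarith
      have h2 : lam2 ≠ 0 := hlam2.ne'
      field_simp
    rw [← heq, ← htsum]
    exact hsummable.hasSum
  · -- divergent case
    intro hle
    have hfact : ∀ m : ℕ, (∏ k ∈ Finset.range m, ((2:ℝ) + k)) = ((m + 1).factorial : ℝ) := by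
      intro m
      induction m with
      | zero => simp
      | succ m ih =>
        rw [Finset.prod_range_succ, ih,
          show (m + 1) + 1 = (m + 1) + 1 from rfl, Nat.factorial_succ (m + 1)]
        push_cast
        ring
    have hblow : ∀ n : ℕ, b / ((n : ℝ) + 2) ≤ f (n + 1) := by
      intro n
      rw [hfs n]
      have hble : b ≤ 1 := (div_le_one hlam2).mpr hle
      have hPle : (∏ k ∈ Finset.range (n+1), (1 + b + (k : ℝ))) ≤ (((n + 1) + 1).factorial : ℝ) := by
        calc (∏ k ∈ Finset.range (n+1), (1 + b + (k : ℝ)))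
            ≤ ∏ k ∈ Finset.range (n+1), ((2:ℝ) + k) :=
              Finset.prod_le_prod (fun k _ => by positivity) (fun k _ => by linarith)
          _ = (((n + 1) + 1).factorial : ℝ) := hfact (n+1)
      have h2 : (((n + 1) + 1).factorial : ℝ) = ((n:ℝ) + 2) * ((n + 1).factorial : ℝ) := by
        rw [Nat.factorial_succ (n + 1)]
        push_cast; ring
      rw [div_le_div_iff₀ (by positivity) (hP (n+1))]
      calc b * ∏ k ∈ Finset.range (n+1), (1 + b + (k : ℝ))
          ≤ b * (((n + 1) + 1).factorial : ℝ) := by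
            exact mul_le_mul_of_nonneg_left hPle hb.le
        _ = b * ((n + 1).factorial : ℝ) * ((n:ℝ) + 2) := by rw [h2]; ring
    have hlower : ∀ N : ℕ, b * (∑ j ∈ Finset.range N, (1 / ((j:ℝ) + 1))) + (-b)
        ≤ ∑ j ∈ Finset.range N, f j := by
      intro N
      induction N with
      | zero => simp; linarith
      | succ N ih =>
        rw [Finset.sum_range_succ, Finset.sum_range_succ, mul_add]
        cases N with
        | zero =>
          simp only [hf0, Finset.range_zero, Finset.sum_empty, Nat.cast_zero]
          norm_num
        | succ m =>
          have h1 : b * (1 / ((((m+1) : ℕ):ℝ) + 1)) ≤ f (m + 1) := by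
            rw [mul_one_div]
            have := hblow m
            push_cast at this ⊢
            rw [show ((m:ℝ) + 1 + 1) = (m:ℝ) + 2 by ring]
            exact this
          linarith
    have h := Real.tendsto_sum_range_one_div_nat_succ_atTop.const_mul_atTop hb
    have h2 := tendsto_atTop_add_const_right atTop (-b) h
    exact tendsto_atTop_mono hlower h2
end

section
/- Let λ₁ > 0, λ₂ > 0 and μ₂ ≥ 0 with λ₂ ≠ μ₂. For j ≥ 1 and v ≥ 0 set q_j(v) = (λ₂−μ₂)² e^{−(λ₂−μ₂)v} λ₂^{j−1} (1−e^{−(λ₂−μ₂)v})^{j−1} / (λ₂ − μ₂ e^{−(λ₂−μ₂)v})^{j+1}, and set p_j = λ₁ ∫₀^∞ e^{−λ₁ v} q_j(v) dv. If λ₂ − μ₂ < λ₁ then Σ_{j≥1} j·p_j = λ₁/(λ₁ − (λ₂−μ₂)); if λ₂ − μ₂ ≥ λ₁ then the series Σ_{j≥1} j·p_j diverges to +∞. -/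
open Filter Topology MeasureTheory

/-- `q_j(v)`, the probability that a linear birth-death process with birth rate
`λ₂`, death rate `μ₂` and initial state `1` is in state `j ≥ 1` at time `v`. -/
noncomputable def bdProb (lam2 mu2 : ℝ) (j : ℕ) (v : ℝ) : ℝ :=
  (lam2 - mu2) ^ 2 * Real.exp (-(lam2 - mu2) * v) * lam2 ^ (j - 1) *
    (1 - Real.exp (-(lam2 - mu2) * v)) ^ (j - 1) /
    (lam2 - mu2 * Real.exp (-(lam2 - mu2) * v)) ^ (j + 1)

/-- Limit in-degree distribution of the preferential attachment–detachment
model: `p_j = λ₁ ∫₀^∞ e^(-λ₁ v) q_j(v) dv` for `j ≥ 1`. -/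
noncomputable def limP (lam1 lam2 mu2 : ℝ) (j : ℕ) : ℝ :=
  lam1 * ∫ v in Set.Ioi (0:ℝ), Real.exp (-lam1 * v) * bdProb lam2 mu2 j v

/-!
For fixed `v > 0` the law `j ↦ q_j(v)` on `j ≥ 1` is geometric:
`q_j(v) = e^{(λ₂-μ₂)v} (1 - r)² r^{j-1}` with `r = r(v) ∈ (0, 1)`, so that its mean is
`∑ j q_j(v) = e^{(λ₂-μ₂)v}`. By Tonelli, `∑ j p_j = λ₁ ∫₀^∞ e^{(λ₂-μ₂-λ₁)v} dv`, which is
`λ₁/(λ₁-(λ₂-μ₂))` when `λ₂ - μ₂ < λ₁` and `+∞` otherwise. Computing in `ℝ≥0∞` treats both cases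
at once.
-/

open Real Set
open scoped ENNReal

theorem hasSum_natCast_mul_sq_one_sub_mul_pow_pred {r : ℝ} (hr : ‖r‖ < 1) :
    HasSum (fun j : ℕ => (j : ℝ) * ((1 - r) ^ 2 * r ^ (j - 1))) 1 := by
  have hr1 : 1 - r ≠ 0 := sub_ne_zero.mpr (fun h => by simp [← h] at hr)
  have hshift : HasSum (fun n : ℕ => ((n : ℝ) + 1) * r ^ n) ((1 - r) ^ 2)⁻¹ := by
    have h := (hasSum_coe_mul_geometric_of_norm_lt_one hr).add (hasSum_geometric_of_norm_lt_one hr)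
    rw [show r / (1 - r) ^ 2 + (1 - r)⁻¹ = ((1 - r) ^ 2)⁻¹ by field_simp; ring] at h
    simpa only [add_one_mul] using h
  have h := hshift.mul_left ((1 - r) ^ 2)
  rw [mul_inv_cancel₀ (pow_ne_zero 2 hr1)] at h
  refine (hasSum_nat_add_iff' 1).mp ?_
  simpa [mul_left_comm] using h

theorem hasSum_of_tsum_ofReal_eq {α : Type*} {f : α → ℝ} (hf : ∀ i, 0 ≤ f i) {s : ℝ}
    (hs : 0 ≤ s) (h : ∑' i, ENNReal.ofReal (f i) = ENNReal.ofReal s) : HasSum f s := by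
  have hsum : Summable f :=
    (ENNReal.summable_toReal (h ▸ ENNReal.ofReal_ne_top)).congr fun i =>
      ENNReal.toReal_ofReal (hf i)
  rw [← ENNReal.ofReal_tsum_of_nonneg hf hsum,
    ENNReal.ofReal_eq_ofReal_iff (tsum_nonneg hf) hs] at h
  exact h ▸ hsum.hasSum

theorem tendsto_sum_range_atTop_of_tsum_ofReal_eq_top {f : ℕ → ℝ} (hf : ∀ n, 0 ≤ f n)
    (h : ∑' n, ENNReal.ofReal (f n) = ∞) :
    Tendsto (fun n => ∑ i ∈ Finset.range n, f i) atTop atTop :=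
  (not_summable_iff_tendsto_nat_atTop_of_nonneg hf).mp fun hsum => hsum.tsum_ofReal_ne_top h

theorem tsum_ofReal_integral_eq_lintegral_ofReal {α : Type*} [MeasurableSpace α] {μ : Measure α}
    {g : ℕ → α → ℝ} {F : α → ℝ} (hg : ∀ j, Integrable (g j) μ) (hg0 : ∀ j, 0 ≤ᵐ[μ] g j)
    (hF : ∀ᵐ x ∂μ, HasSum (fun j => g j x) (F x)) :
    ∑' j, ENNReal.ofReal (∫ x, g j x ∂μ) = ∫⁻ x, ENNReal.ofReal (F x) ∂μ := by
  simp_rw [ofReal_integral_eq_lintegral_ofReal (hg _) (hg0 _)]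
  rw [← lintegral_tsum fun j => (hg j).aemeasurable.ennreal_ofReal]
  refine lintegral_congr_ae ?_
  filter_upwards [hF, ae_all_iff.mpr hg0] with x hFx hg0x
  rw [← ENNReal.ofReal_tsum_of_nonneg hg0x hFx.summable, hFx.tsum_eq]

theorem lintegral_Ioi_ofReal_exp_mul_of_neg {c : ℝ} (hc : c < 0) :
    ∫⁻ v in Ioi 0, ENNReal.ofReal (exp (c * v)) = ENNReal.ofReal (-c⁻¹) := by
  rw [← ofReal_integral_eq_lintegral_ofReal (integrableOn_exp_mul_Ioi hc 0)
    (ae_of_all _ fun _ => (exp_pos _).le), integral_exp_mul_Ioi hc, mul_zero, exp_zero,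
    neg_div, one_div]

theorem lintegral_Ioi_ofReal_exp_mul_of_nonneg {c : ℝ} (hc : 0 ≤ c) :
    ∫⁻ v in Ioi 0, ENNReal.ofReal (exp (c * v)) = ∞ := by
  refine top_le_iff.mp ?_
  calc ∞ = ∫⁻ _ in Ioi (0 : ℝ), 1 := by simp
    _ ≤ _ := setLIntegral_mono' measurableSet_Ioi fun v hv =>
      ENNReal.one_le_ofReal.mpr (one_le_exp (mul_nonneg hc (le_of_lt hv)))

theorem mul_one_sub_exp_neg_mul_pos {a v : ℝ} (ha : a ≠ 0) (hv : 0 < v) :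
    0 < a * (1 - exp (-a * v)) := by
  rcases ha.lt_or_gt with ha | ha
  · exact mul_pos_of_neg_of_neg ha (sub_neg.mpr (one_lt_exp_iff.mpr (by nlinarith)))
  · exact mul_pos ha (sub_pos.mpr (exp_lt_one_iff.mpr (by nlinarith)))

noncomputable def bdRatio (lam2 mu2 v : ℝ) : ℝ :=
  lam2 * (1 - exp (-(lam2 - mu2) * v)) / (lam2 - mu2 * exp (-(lam2 - mu2) * v))

theorem bdProb_succ (lam2 mu2 v : ℝ) (j : ℕ) :
    bdProb lam2 mu2 (j + 1) v = bdProb lam2 mu2 1 v * bdRatio lam2 mu2 v ^ j := by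
  simp only [bdProb, bdRatio]
  generalize exp (-(lam2 - mu2) * v) = E
  generalize lam2 - mu2 * E = D
  simp only [Nat.add_sub_cancel, Nat.sub_self, pow_zero, pow_succ, div_pow, mul_pow]
  ring

theorem measurable_bdProb (lam2 mu2 : ℝ) (j : ℕ) : Measurable (bdProb lam2 mu2 j) := by
  unfold bdProb
  fun_prop

section BirthDeath

variable {lam2 mu2 v : ℝ}

theorem mul_bdDenom_pos (hmu2 : 0 ≤ mu2) (hne : lam2 ≠ mu2) (hv : 0 < v) :
    0 < (lam2 - mu2) * (lam2 - mu2 * exp (-(lam2 - mu2) * v)) := by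
  have h := mul_one_sub_exp_neg_mul_pos (sub_ne_zero.mpr hne) hv
  have ha : 0 < (lam2 - mu2) ^ 2 := sq_pos_of_ne_zero (sub_ne_zero.mpr hne)
  nlinarith [mul_nonneg hmu2 h.le]

theorem bdRatio_pos (hlam2 : 0 < lam2) (hmu2 : 0 ≤ mu2) (hne : lam2 ≠ mu2) (hv : 0 < v) :
    0 < bdRatio lam2 mu2 v := by
  rw [bdRatio, ← mul_div_mul_left _ _ (sub_ne_zero.mpr hne), mul_left_comm]
  exact div_pos (mul_pos hlam2 (mul_one_sub_exp_neg_mul_pos (sub_ne_zero.mpr hne) hv))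
    (mul_bdDenom_pos hmu2 hne hv)

theorem one_sub_bdRatio (hmu2 : 0 ≤ mu2) (hne : lam2 ≠ mu2) (hv : 0 < v) :
    1 - bdRatio lam2 mu2 v =
      (lam2 - mu2) * exp (-(lam2 - mu2) * v) / (lam2 - mu2 * exp (-(lam2 - mu2) * v)) := by
  have hD := right_ne_zero_of_mul (mul_bdDenom_pos hmu2 hne hv).ne'
  rw [bdRatio, eq_div_iff hD, sub_mul, div_mul_cancel₀ _ hD]
  ring

theorem bdRatio_lt_one (hmu2 : 0 ≤ mu2) (hne : lam2 ≠ mu2) (hv : 0 < v) :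
    bdRatio lam2 mu2 v < 1 := by
  rw [← sub_pos, one_sub_bdRatio hmu2 hne hv, ← mul_div_mul_left _ _ (sub_ne_zero.mpr hne),
    ← mul_assoc]
  exact div_pos (mul_pos (mul_self_pos.mpr (sub_ne_zero.mpr hne)) (exp_pos _))
    (mul_bdDenom_pos hmu2 hne hv)

theorem bdProb_one_eq (hmu2 : 0 ≤ mu2) (hne : lam2 ≠ mu2) (hv : 0 < v) :
    bdProb lam2 mu2 1 v = exp ((lam2 - mu2) * v) * (1 - bdRatio lam2 mu2 v) ^ 2 := by
  have hD := right_ne_zero_of_mul (mul_bdDenom_pos hmu2 hne hv).ne'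
  have hE : exp ((lam2 - mu2) * v) * exp (-(lam2 - mu2) * v) = 1 := by
    rw [← exp_add, neg_mul, add_neg_cancel, exp_zero]
  rw [one_sub_bdRatio hmu2 hne hv, bdProb]
  simp only [Nat.sub_self, pow_zero, mul_one, div_pow]
  rw [mul_div_assoc', div_left_inj' (pow_ne_zero 2 hD)]
  linear_combination (-((lam2 - mu2) ^ 2 * exp (-(lam2 - mu2) * v))) * hE

theorem bdProb_one_le_one (hlam2 : 0 < lam2) (hmu2 : 0 ≤ mu2) (hne : lam2 ≠ mu2) (hv : 0 < v) :
    bdProb lam2 mu2 1 v ≤ 1 := by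
  have h := mul_one_sub_exp_neg_mul_pos (sub_ne_zero.mpr hne) hv
  have hD := mul_bdDenom_pos hmu2 hne hv
  set a := lam2 - mu2
  set E := exp (-a * v)
  have hE : 0 < E := exp_pos _
  have ha : 0 < a ^ 2 := sq_pos_of_ne_zero (sub_ne_zero.mpr hne)
  -- `a D = a² + μ₂ a (1 - E) = a² E + λ₂ a (1 - E)` bounds `(a D)²` below by `a² · a² E`
  have h1 : a ^ 2 ≤ a * (lam2 - mu2 * E) := by nlinarith [mul_nonneg hmu2 h.le]
  have h2 : a ^ 2 * E ≤ a * (lam2 - mu2 * E) := by nlinarith [mul_pos hlam2 h]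
  have h3 : a ^ 2 * E ≤ (lam2 - mu2 * E) ^ 2 := by
    refine le_of_mul_le_mul_left ?_ ha
    nlinarith [mul_le_mul h1 h2 (by positivity) (by positivity)]
  simp only [bdProb, Nat.sub_self, pow_zero, mul_one]
  exact div_le_one_of_le₀ h3 (sq_nonneg _)

theorem bdProb_succ_le_one (hlam2 : 0 < lam2) (hmu2 : 0 ≤ mu2) (hne : lam2 ≠ mu2) (hv : 0 < v)
    (j : ℕ) : bdProb lam2 mu2 (j + 1) v ≤ 1 := by
  rw [bdProb_succ]
  exact mul_le_one₀ (bdProb_one_le_one hlam2 hmu2 hne hv)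
    (pow_nonneg (bdRatio_pos hlam2 hmu2 hne hv).le j)
    (pow_le_one₀ (bdRatio_pos hlam2 hmu2 hne hv).le (bdRatio_lt_one hmu2 hne hv).le)

theorem natCast_mul_bdProb (hmu2 : 0 ≤ mu2) (hne : lam2 ≠ mu2) (hv : 0 < v) (j : ℕ) :
    (j : ℝ) * bdProb lam2 mu2 j v = exp ((lam2 - mu2) * v) *
      (j * ((1 - bdRatio lam2 mu2 v) ^ 2 * bdRatio lam2 mu2 v ^ (j - 1))) := by
  cases j with
  | zero => simp
  | succ j =>
    rw [bdProb_succ, bdProb_one_eq hmu2 hne hv, Nat.add_sub_cancel]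
    ring

theorem natCast_mul_bdProb_nonneg (hlam2 : 0 < lam2) (hmu2 : 0 ≤ mu2) (hne : lam2 ≠ mu2)
    (hv : 0 < v) (j : ℕ) : 0 ≤ (j : ℝ) * bdProb lam2 mu2 j v := by
  have hr := (bdRatio_pos hlam2 hmu2 hne hv).le
  rw [natCast_mul_bdProb hmu2 hne hv]
  positivity

theorem natCast_mul_bdProb_le (hlam2 : 0 < lam2) (hmu2 : 0 ≤ mu2) (hne : lam2 ≠ mu2)
    (hv : 0 < v) (j : ℕ) : (j : ℝ) * bdProb lam2 mu2 j v ≤ j := by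
  cases j with
  | zero => simp
  | succ j =>
    exact mul_le_of_le_one_right j.succ.cast_nonneg (bdProb_succ_le_one hlam2 hmu2 hne hv j)

theorem hasSum_natCast_mul_bdProb (hlam2 : 0 < lam2) (hmu2 : 0 ≤ mu2) (hne : lam2 ≠ mu2)
    (hv : 0 < v) :
    HasSum (fun j : ℕ => (j : ℝ) * bdProb lam2 mu2 j v) (exp ((lam2 - mu2) * v)) := by
  have hr : ‖bdRatio lam2 mu2 v‖ < 1 := by
    rw [norm_of_nonneg (bdRatio_pos hlam2 hmu2 hne hv).le]
    exact bdRatio_lt_one hmu2 hne hv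
  simpa [natCast_mul_bdProb hmu2 hne hv] using
    (hasSum_natCast_mul_sq_one_sub_mul_pow_pred hr).mul_left (exp ((lam2 - mu2) * v))

end BirthDeath

theorem integrableOn_exp_mul_natCast_mul_bdProb {lam1 lam2 mu2 : ℝ} (hlam1 : 0 < lam1)
    (hlam2 : 0 < lam2) (hmu2 : 0 ≤ mu2) (hne : lam2 ≠ mu2) (j : ℕ) :
    IntegrableOn (fun v => exp (-lam1 * v) * (j * bdProb lam2 mu2 j v)) (Ioi 0) := by
  refine ((exp_neg_integrableOn_Ioi 0 hlam1).const_mul j).mono'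
    (by have := measurable_bdProb lam2 mu2 j; fun_prop) ?_
  refine (ae_restrict_iff' measurableSet_Ioi).mpr (ae_of_all _ fun v hv => ?_)
  rw [norm_of_nonneg (mul_nonneg (exp_pos _).le (natCast_mul_bdProb_nonneg hlam2 hmu2 hne hv j)),
    mul_comm]
  exact mul_le_mul_of_nonneg_right (natCast_mul_bdProb_le hlam2 hmu2 hne hv j) (exp_pos _).le

theorem natCast_mul_limP (lam1 lam2 mu2 : ℝ) (j : ℕ) :
    j * limP lam1 lam2 mu2 j =
      lam1 * ∫ v in Ioi 0, exp (-lam1 * v) * (j * bdProb lam2 mu2 j v) := by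
  simp_rw [limP, mul_left_comm _ (j : ℝ), integral_const_mul]
  ring

theorem natCast_mul_limP_nonneg {lam1 lam2 mu2 : ℝ} (hlam1 : 0 < lam1) (hlam2 : 0 < lam2)
    (hmu2 : 0 ≤ mu2) (hne : lam2 ≠ mu2) (j : ℕ) : 0 ≤ j * limP lam1 lam2 mu2 j := by
  rw [natCast_mul_limP]
  exact mul_nonneg hlam1.le (setIntegral_nonneg measurableSet_Ioi fun v hv =>
    mul_nonneg (exp_pos _).le (natCast_mul_bdProb_nonneg hlam2 hmu2 hne hv j))

theorem tsum_ofReal_natCast_mul_limP {lam1 lam2 mu2 : ℝ} (hlam1 : 0 < lam1) (hlam2 : 0 < lam2)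
    (hmu2 : 0 ≤ mu2) (hne : lam2 ≠ mu2) :
    ∑' j : ℕ, ENNReal.ofReal (j * limP lam1 lam2 mu2 j) =
      ENNReal.ofReal lam1 * ∫⁻ v in Ioi 0, ENNReal.ofReal (exp ((lam2 - mu2 - lam1) * v)) := by
  have hsum : ∀ᵐ v ∂volume.restrict (Ioi 0),
      HasSum (fun j : ℕ => exp (-lam1 * v) * (j * bdProb lam2 mu2 j v))
        (exp ((lam2 - mu2 - lam1) * v)) := by
    refine (ae_restrict_iff' measurableSet_Ioi).mpr (ae_of_all _ fun v hv => ?_)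
    have h := (hasSum_natCast_mul_bdProb hlam2 hmu2 hne hv).mul_left (exp (-lam1 * v))
    rwa [← exp_add, show -lam1 * v + (lam2 - mu2) * v = (lam2 - mu2 - lam1) * v by ring] at h
  simp_rw [natCast_mul_limP, ENNReal.ofReal_mul hlam1.le, ENNReal.tsum_mul_left]
  rw [tsum_ofReal_integral_eq_lintegral_ofReal
    (integrableOn_exp_mul_natCast_mul_bdProb hlam1 hlam2 hmu2 hne)
    (fun j => (ae_restrict_iff' measurableSet_Ioi).mpr (ae_of_all _ fun v hv =>
      mul_nonneg (exp_pos _).le (natCast_mul_bdProb_nonneg hlam2 hmu2 hne hv j))) hsum]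

/-- If `λ₂ - μ₂ < λ₁` then `∑_{j≥1} j p_j = λ₁/(λ₁-(λ₂-μ₂))`; if
`λ₂ - μ₂ ≥ λ₁` the series `∑_{j≥1} j p_j` diverges to `+∞`. -/
theorem expected_degree_with_detachment (lam1 lam2 mu2 : ℝ)
    (hlam1 : 0 < lam1) (hlam2 : 0 < lam2) (hmu2 : 0 ≤ mu2) (hne : lam2 ≠ mu2) :
    (lam2 - mu2 < lam1 →
      HasSum (fun j : ℕ => (j : ℝ) * limP lam1 lam2 mu2 j)
        (lam1 / (lam1 - (lam2 - mu2)))) ∧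
    (lam1 ≤ lam2 - mu2 →
      Tendsto (fun n => ∑ j ∈ Finset.range n, (j : ℝ) * limP lam1 lam2 mu2 j)
        atTop atTop) := by
  have hterm_nonneg := natCast_mul_limP_nonneg hlam1 hlam2 hmu2 hne
  have hmean := tsum_ofReal_natCast_mul_limP hlam1 hlam2 hmu2 hne
  refine ⟨fun h => ?_, fun h => ?_⟩
  · rw [lintegral_Ioi_ofReal_exp_mul_of_neg (by linarith), ← ENNReal.ofReal_mul hlam1.le] at hmean
    refine hasSum_of_tsum_ofReal_eq hterm_nonneg (div_nonneg hlam1.le (by linarith)) ?_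
    rw [hmean, div_eq_mul_inv, neg_inv, neg_sub]
  · rw [lintegral_Ioi_ofReal_exp_mul_of_nonneg (by linarith),
      ENNReal.mul_top (ENNReal.ofReal_pos.mpr hlam1).ne'] at hmean
    exact tendsto_sum_range_atTop_of_tsum_ofReal_eq_top hterm_nonneg hmean
end

section
/- Let λ₁ > 0 and λ₂ > μ₂ > 0, and set γ = λ₁/(λ₂−μ₂). Then λ₁ ∫₀^∞ e^{−λ₁ v} · μ₂(1 − e^{−(λ₂−μ₂)v})/(λ₂ − μ₂ e^{−(λ₂−μ₂)v}) dv = (μ₂λ₁/(λ₂(λ₂−μ₂)))·B(2, γ)·₂F₁(1, γ, 2+γ, μ₂/λ₂). -/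
open Filter Topology MeasureTheory

/-- Supercritical extinction identity: for `γ = λ₁/(λ₂-μ₂)`,
`λ₁ ∫₀^∞ e^(-λ₁v) μ₂(1-e^(-(λ₂-μ₂)v))/(λ₂-μ₂e^(-(λ₂-μ₂)v)) dv
  = (μ₂λ₁/(λ₂(λ₂-μ₂))) B(2,γ) ₂F₁(1, γ, 2+γ, μ₂/λ₂)`. -/
theorem supercritical_extinction_integral (lam1 lam2 mu2 gam : ℝ)
    (hlam1 : 0 < lam1) (hmu2 : 0 < mu2) (h : mu2 < lam2)
    (hgam : gam = lam1 / (lam2 - mu2)) :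
    lam1 * ∫ v in Set.Ioi (0:ℝ),
        Real.exp (-lam1 * v) * (mu2 * (1 - Real.exp (-(lam2 - mu2) * v)) /
          (lam2 - mu2 * Real.exp (-(lam2 - mu2) * v))) =
      mu2 * lam1 / (lam2 * (lam2 - mu2)) * betaFn 2 gam *
        gauss2F1 1 gam (2 + gam) (mu2 / lam2) := by
  have hlam2 : 0 < lam2 := hmu2.trans h
  have hd0 : (0:ℝ) < lam2 - mu2 := by linarith
  set d : ℝ := lam2 - mu2 with hdd
  have hgam0 : 0 < gam := by rw [hgam]; positivity
  set z : ℝ := mu2 / lam2 with hz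
  set K : ℝ := ∫ s in (0:ℝ)..1,
      s ^ (gam - 1) * (1 - s) ^ ((1:ℝ)) * (1 - s * z) ^ ((-1:ℝ)) with hK
  -- image of the substitution map
  have himg : (fun v : ℝ => Real.exp (-d * v)) '' Set.Ioi 0 = Set.Ioo (0:ℝ) 1 := by
    ext s
    constructor
    · rintro ⟨v, hv, rfl⟩
      have hv0 : (0:ℝ) < v := hv
      exact ⟨Real.exp_pos _, Real.exp_lt_one_iff.mpr (by nlinarith)⟩
    · rintro ⟨h0, h1⟩
      refine ⟨-Real.log s / d, ?_, ?_⟩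
      · have : Real.log s < 0 := Real.log_neg h0 h1
        have : 0 < -Real.log s := by linarith
        exact div_pos this hd0
      · show Real.exp (-d * (-Real.log s / d)) = s
        have : -d * (-Real.log s / d) = Real.log s := by
          field_simp
        rw [this, Real.exp_log h0]
  -- change of variables
  have hderiv : ∀ x ∈ Set.Ioi (0:ℝ),
      HasDerivWithinAt (fun v : ℝ => Real.exp (-d * v))
        (-d * Real.exp (-d * x)) (Set.Ioi 0) x := by
    intro x _
    have : HasDerivAt (fun v : ℝ => Real.exp (-d * v)) (Real.exp (-d * x) * (-d * 1)) x :=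
      ((hasDerivAt_id x).const_mul (-d)).exp
    simpa [mul_comm] using this.hasDerivWithinAt
  have hinj : Set.InjOn (fun v : ℝ => Real.exp (-d * v)) (Set.Ioi 0) := by
    intro x _ y _ hxy
    have := Real.exp_injective hxy
    have := mul_left_cancel₀ (neg_ne_zero.mpr hd0.ne') this
    exact this
  have hsub := integral_image_eq_integral_abs_deriv_smul
      measurableSet_Ioi hderiv hinj
      (fun s => mu2 / (d * lam2) *
        (s ^ (gam - 1) * (1 - s) ^ ((1:ℝ)) * (1 - s * z) ^ ((-1:ℝ))))
  rw [himg] at hsub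
  -- pointwise identification of the integrand
  have hpt : Set.EqOn
      (fun v => Real.exp (-lam1 * v) * (mu2 * (1 - Real.exp (-d * v)) /
          (lam2 - mu2 * Real.exp (-d * v))))
      (fun v => |(-d * Real.exp (-d * v))| •
        (mu2 / (d * lam2) *
          ((Real.exp (-d * v)) ^ (gam - 1) * (1 - Real.exp (-d * v)) ^ ((1:ℝ)) *
            (1 - Real.exp (-d * v) * z) ^ ((-1:ℝ)))))
      (Set.Ioi 0) := by
    intro v hv
    have hv0 : (0:ℝ) < v := hv
    simp only [smul_eq_mul]
    set s : ℝ := Real.exp (-d * v) with hs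
    have hs0 : 0 < s := Real.exp_pos _
    have hs1 : s < 1 := Real.exp_lt_one_iff.mpr (by nlinarith)
    have habs : |(-d * s)| = d * s := by
      rw [abs_of_nonpos (by nlinarith)]; ring
    have hexp : Real.exp (-lam1 * v) = s ^ gam := by
      rw [hs, ← Real.exp_log (Real.rpow_pos_of_pos hs0 gam),
        Real.log_rpow hs0, Real.log_exp]
      congr 1
      rw [hgam]; field_simp
    have hsplit : s ^ gam = s ^ (gam - 1) * s := by
      rw [← Real.rpow_add_one hs0.ne' (gam - 1)]; ring_nf
    have h1s : (1 - s) ^ ((1:ℝ)) = 1 - s := Real.rpow_one _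
    have hzpos : 0 < 1 - s * z := by
      rw [hz]
      have : s * (mu2 / lam2) < 1 * 1 := by
        apply mul_lt_mul' hs1.le _ (by positivity) one_pos
        rw [div_lt_one hlam2]; exact h
      linarith [this]
    have hinv : (1 - s * z) ^ ((-1:ℝ)) = (1 - s * z)⁻¹ := Real.rpow_neg_one _
    have hden : lam2 - mu2 * s > 0 := by nlinarith
    simp only [smul_eq_mul, habs, hexp, hsplit, h1s, hinv]
    clear hs
    clear_value s
    rw [hz]
    have hdz : 1 - s * (mu2 / lam2) ≠ 0 := by rw [hz] at hzpos; linarith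
    have key : (1 - s * (mu2 / lam2))⁻¹ = lam2 / (lam2 - mu2 * s) := by
      rw [inv_eq_one_div, div_eq_div_iff hdz hden.ne']
      field_simp
    rw [key]
    field_simp
  have hset : (∫ v in Set.Ioi (0:ℝ),
      Real.exp (-lam1 * v) * (mu2 * (1 - Real.exp (-d * v)) /
          (lam2 - mu2 * Real.exp (-d * v))))
      = mu2 / (d * lam2) * K := by
    rw [MeasureTheory.setIntegral_congr_fun measurableSet_Ioi hpt, ← hsub, hK,
      intervalIntegral.integral_of_le (by norm_num : (0:ℝ) ≤ 1),
      ← MeasureTheory.integral_Ioc_eq_integral_Ioo, ← MeasureTheory.integral_const_mul]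
  -- value of betaFn gam 2
  have hmulpt : ∀ s ∈ Set.uIcc (0:ℝ) 1,
      s ^ (gam - 1) * (1 - s) ^ ((2:ℝ) - 1) = s ^ (gam - 1) - s ^ gam := by
    intro s hs
    rw [show ((2:ℝ) - 1) = 1 by norm_num, Real.rpow_one]
    rcases eq_or_ne s 0 with rfl | hne
    · simp [Real.zero_rpow hgam0.ne']
    · rw [mul_sub, mul_one, ← Real.rpow_add_one hne]; ring_nf
  have hbval : betaFn gam 2 = 1 / gam - 1 / (gam + 1) := by
    unfold betaFn
    open intervalIntegral in
    rw [intervalIntegral.integral_congr hmulpt,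
      intervalIntegral.integral_sub (intervalIntegrable_rpow' (by linarith))
        (intervalIntegrable_rpow' (by linarith)),
      integral_rpow (Or.inl (by linarith)),
      integral_rpow (Or.inl (by linarith)),
      show gam - 1 + 1 = gam by ring, Real.one_rpow, Real.one_rpow,
      Real.zero_rpow hgam0.ne', Real.zero_rpow (by positivity : (0:ℝ) < gam + 1).ne']
    ring
  have hbpos : 0 < betaFn gam 2 := by
    rw [hbval]
    rw [sub_pos, div_lt_div_iff₀ (by linarith) hgam0]
    linarith
  -- symmetry of the beta function
  have hsymm : betaFn 2 gam = betaFn gam 2 := by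
    unfold betaFn
    have hcs := intervalIntegral.integral_comp_sub_left (a := (0:ℝ)) (b := 1)
      (fun s => s ^ ((2:ℝ) - 1) * (1 - s) ^ (gam - 1)) 1
    simp only [sub_sub_cancel, sub_self, sub_zero] at hcs
    rw [← hcs]
    apply intervalIntegral.integral_congr
    intro s _
    ring
  -- identify gauss2F1 with K
  have hgauss : gauss2F1 1 gam (2 + gam) z = (betaFn gam 2)⁻¹ * K := by
    unfold gauss2F1
    rw [show (2:ℝ) + gam - gam = 2 by ring, hK]
    norm_num
  rw [hset, hgauss, hsymm]
  field_simp
end
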